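/- arXiv:2010.09627 — 2 statements merged into one kernel-verified Lean document; each statement's English description precedes it below -/
import Mathlib

section
/- Let Y be a real random variable with E[Y] = 0 and all moments finite, and let (Y_k) be i.i.d. copies with partial sums S_k. Then S_Y(j,m) = (1/m!) ∑_{k=0}^{m} C(m,k)(-1)^{m-k} E[S_k^j] = 0 whenever j < 2m. -/
/-!
Expanding `S_{k+1}^j = (S_k + Y_k)^j` binomially and using independence of `S_k` and `Y_k`,
`E[S_{k+1}^j] - E[S_k^j]` is a linear combination of the moments `E[S_k^p]` with `p ≤ j - 2`:
the term `p = j` cancels because `E[Y^0] = 1` and the term `p = j - 1` vanishes because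
`E[Y] = 0`. Hence every forward difference in `k` lowers the degree `j` by at least two, and the
`m`-th forward difference of `k ↦ E[S_k^j]` at `0`, which is `m! S_Y(j,m)`, vanishes for `j < 2m`.
-/

open MeasureTheory ProbabilityTheory Finset fwdDiff

theorem fwdDiff_iter_eq_zero_of_lt_two_mul {M R G : Type*} [AddCommMonoid M] [Monoid R]
    [AddCommGroup G] [DistribMulAction R G] (h : M) (f : ℕ → M → G) (c : ℕ → ℕ → R)
    (hf : ∀ j, Δ_[h] (f j) = ∑ p ∈ range (j - 1), c j p • f p) (m j : ℕ) (hjm : j < 2 * m) :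
    Δ_[h] ^[m] (f j) = 0 := by
  induction m generalizing j with
  | zero => omega
  | succ m ih =>
    rw [Function.iterate_succ_apply, hf, fwdDiff_iter_finsetSum]
    refine sum_eq_zero fun p hp => ?_
    rw [fwdDiff_iter_const_smul, ih p (by grind), smul_zero]

section Moments

variable {Ω : Type*} [MeasurableSpace Ω] {μ : Measure Ω}

lemma memLp_of_integrable_abs_pow {X : Ω → ℝ} (hX : AEStronglyMeasurable X μ) {p : ℕ}
    (h : Integrable (fun ω => |X ω| ^ p) μ) : MemLp X p μ := by
  rcases eq_or_ne p 0 with rfl | hp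
  · simpa using hX
  · exact (integrable_norm_rpow_iff hX (by simpa) (by simp)).1 (by simpa using h)

lemma MeasureTheory.MemLp.integrable_pow [IsFiniteMeasure μ] {X : Ω → ℝ} {p : ℕ}
    (hX : MemLp X p μ) : Integrable (fun ω => X ω ^ p) μ :=
  hX.integrable_norm_pow'.mono' (hX.aestronglyMeasurable.pow p)
    (ae_of_all _ fun _ => (norm_pow _ _).le)

variable {Y : ℕ → Ω → ℝ}

lemma integral_sum_range_succ_pow [IsFiniteMeasure μ] (hmeas : ∀ i, Measurable (Y i))
    (hindep : iIndepFun Y μ) (hident : ∀ i, IdentDistrib (Y i) (Y 0) μ μ)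
    (hmom : ∀ j : ℕ, Integrable (fun ω => |Y 0 ω| ^ j) μ) (k j : ℕ) :
    ∫ ω, (∑ i ∈ range (k + 1), Y i ω) ^ j ∂μ
      = ∑ p ∈ range (j + 1), (j.choose p : ℝ) *
          (∫ ω, (∑ i ∈ range k, Y i ω) ^ p ∂μ) * ∫ ω, Y 0 ω ^ (j - p) ∂μ := by
  have hind : IndepFun (fun ω => ∑ i ∈ range k, Y i ω) (Y k) μ := by
    simpa only [sum_fn] using hindep.indepFun_sum_range_succ hmeas k
  have hmoment (q : ℕ) : ∫ ω, Y k ω ^ q ∂μ = ∫ ω, Y 0 ω ^ q ∂μ :=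
    ((hident k).comp (measurable_id.pow_const q)).integral_eq
  have hY (i q : ℕ) : MemLp (Y i) q μ :=
    (hident i).memLp_iff.2 (memLp_of_integrable_abs_pow (hmeas 0).aestronglyMeasurable (hmom q))
  have hprod (p q : ℕ) :
      Integrable (fun ω => (∑ i ∈ range k, Y i ω) ^ p * Y k ω ^ q) μ :=
    (hind.comp (measurable_id.pow_const p) (measurable_id.pow_const q)).integrable_mul
      (memLp_finsetSum _ fun i _ => hY i p).integrable_pow (hY k q).integrable_pow
  simp only [sum_range_succ _ k, add_pow]
  rw [integral_finsetSum _ fun p _ => (hprod p (j - p)).mul_const _]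
  refine sum_congr rfl fun p _ => ?_
  rw [integral_mul_const, hind.integral_fun_comp_mul_comp (f := (· ^ p)) (g := (· ^ (j - p)))
    (by fun_prop) (hmeas k).aemeasurable (by fun_prop) (by fun_prop), hmoment]
  ring

lemma fwdDiff_integral_sum_range_pow [IsProbabilityMeasure μ] (hmeas : ∀ i, Measurable (Y i))
    (hindep : iIndepFun Y μ) (hident : ∀ i, IdentDistrib (Y i) (Y 0) μ μ)
    (hmom : ∀ j : ℕ, Integrable (fun ω => |Y 0 ω| ^ j) μ) (hcent : ∫ ω, Y 0 ω ∂μ = 0) (j : ℕ) :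
    Δ_[1] (fun k => ∫ ω, (∑ i ∈ range k, Y i ω) ^ j ∂μ)
      = ∑ p ∈ range (j - 1), ((j.choose p : ℝ) * ∫ ω, Y 0 ω ^ (j - p) ∂μ) •
          fun k => ∫ ω, (∑ i ∈ range k, Y i ω) ^ p ∂μ := by
  ext k
  simp only [fwdDiff, Finset.sum_apply, Pi.smul_apply, smul_eq_mul]
  rw [integral_sum_range_succ_pow hmeas hindep hident hmom]
  rcases j with _ | _ | n
  · simp
  · simp [sum_range_succ, hcent]
  · rw [sum_range_succ, sum_range_succ]
    simp [hcent, show n + 1 + 1 - (n + 1) = 1 by omega]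
    exact sum_congr rfl fun p _ => by ring

end Moments

/-- If `E[Y] = 0` and all moments are finite, then the probabilistic Stirling number
`S_Y(j,m) = (1/m!) ∑_{k=0}^m C(m,k)(-1)^{m-k} E[S_k^j]` vanishes whenever `j < 2m`. -/
theorem stmt_7 {Ω : Type*} [MeasurableSpace Ω] (μ : Measure Ω) [IsProbabilityMeasure μ]
    (Y : ℕ → Ω → ℝ) (hmeas : ∀ i, Measurable (Y i))
    (hindep : iIndepFun Y μ)
    (hident : ∀ i, IdentDistrib (Y i) (Y 0) μ μ)
    (hmom : ∀ j : ℕ, Integrable (fun ω => |Y 0 ω| ^ j) μ)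
    (hcent : ∫ ω, Y 0 ω ∂μ = 0)
    (j m : ℕ) (hjm : j < 2 * m) :
    (m.factorial : ℝ)⁻¹ * ∑ k ∈ Finset.range (m + 1), (m.choose k : ℝ) * (-1) ^ (m - k) *
        ∫ ω, (∑ i ∈ Finset.range k, Y i ω) ^ j ∂μ = 0 := by
  have hdiff := congr_fun (fwdDiff_iter_eq_zero_of_lt_two_mul 1 _ _
    (fwdDiff_integral_sum_range_pow hmeas hindep hident hmom hcent) m j hjm) 0
  rw [fwdDiff_iter_eq_sum_shift, Pi.zero_apply] at hdiff
  convert mul_zero _ using 2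
  rw [← hdiff]
  refine sum_congr rfl fun k _ => ?_
  simp only [zero_add, smul_eq_mul, mul_one, zsmul_eq_mul]
  push_cast
  ring
end

section
/- Let Y be a real random variable with E[Y^k] = 0 for k = 1,...,r and all moments finite, with partial sums S_k of i.i.d. copies, and τ = ⌊j/(r+1)⌋. Then for every n ≥ τ, E[S_n^j]/(n)_τ = S_Y(j,τ) + (1/(τ-1)!) ∑_{k=0}^{τ-1} C(τ-1, k) (-1)^{τ-k-1}/(n-k) · E[S_k^j], where S_Y(j,m) = (1/m!) ∑_{k=0}^{m} C(m,k)(-1)^{m-k} E[S_k^j] and (n)_τ is the falling factorial. -/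
/-!
Let `f n = E[S_n^j]`. Expanding `S_{n+1}^j = (S_n + Y_n)^j` and using independence, the forward
difference `Δf` is a linear combination of the `n ↦ E[S_n^i]` with `j - i > r`, the other terms
carrying a vanishing moment of `Y`. By strong induction on `j` this gives `Δ^(τ+1) f = 0`, so by
Newton's formula `f n = ∑_{b ≤ τ} C(n, b) Δ^b f(0)`. The first sum on the right is `Δ^τ f(0) / τ!`,
the coefficient of `C(n, τ)`; the second one is the partial fraction expansion of the remaining
terms divided by `(n)_τ`, which we compute basis element by basis element.
-/

open MeasureTheory ProbabilityTheory Finset fwdDiff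
open scoped Nat

lemma fwdDiff_iter_eq_zero_of_le {f : ℕ → ℝ} {a b : ℕ} (hf : Δ_[1] ^[a] f = 0) (hab : a ≤ b) :
    Δ_[1] ^[b] f = 0 := by
  obtain ⟨c, rfl⟩ := Nat.exists_eq_add_of_le hab
  rw [add_comm, Function.iterate_add_apply, hf]
  exact Function.iterate_fixed (funext fun _ => sub_self 0) c

lemma fwdDiff_iter_eq_sum_alternating (g : ℕ → ℝ) (M : ℕ) :
    Δ_[1] ^[M] g 0 = ∑ k ∈ range (M + 1), (M.choose k : ℝ) * (-1) ^ (M - k) * g k := by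
  rw [fwdDiff_iter_eq_sum_shift]
  refine sum_congr rfl fun k _ => ?_
  simp only [zero_add, smul_eq_mul, mul_one, zsmul_eq_mul]
  push_cast
  ring

lemma eq_sum_choose_mul_fwdDiff_iter {f : ℕ → ℝ} {d : ℕ} (hf : Δ_[1] ^[d + 1] f = 0) (n : ℕ) :
    f n = ∑ b ∈ range (d + 1), (n.choose b : ℝ) * Δ_[1] ^[b] f 0 := by
  have hnewton := shift_eq_sum_fwdDiff_iter 1 f n 0
  simp only [smul_eq_mul, mul_one, zero_add, nsmul_eq_mul] at hnewton
  rw [hnewton]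
  refine (sum_subset (range_subset_range.2 (Nat.le_add_right (n + 1) (d + 1))) ?_).trans
    (sum_subset (range_subset_range.2 (Nat.le_add_left (d + 1) (n + 1))) ?_).symm
  · intro b _ hb
    rw [Nat.choose_eq_zero_of_lt (by simpa using hb), Nat.cast_zero, zero_mul]
  · intro b _ hb
    rw [fwdDiff_iter_eq_zero_of_le hf (by simpa using hb), Pi.zero_apply, mul_zero]

lemma sum_alternating_choose_mul_choose (M b : ℕ) :
    ∑ k ∈ range (M + 1), (M.choose k : ℝ) * (-1) ^ (M - k) * k.choose b =
      if M = b then 1 else 0 := by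
  have h := fwdDiff_iter_choose_zero b M
  simp only [fwdDiff_iter_eq_sum_shift, zero_add, smul_eq_mul, mul_one] at h
  have h' := congrArg (Int.cast : ℤ → ℝ) h
  push_cast at h'
  rw [← h']
  exact sum_congr rfl fun k _ => by ring

lemma fwdDiff_iter_inv_sub (y : ℝ) (a m : ℕ) (hy : ∀ i ≤ a, y ≠ m + i) :
    Δ_[1] ^[a] (fun k : ℕ => (y - k)⁻¹) m = a ! * (∏ i ∈ range (a + 1), (y - m - i))⁻¹ := by
  induction a generalizing m with
  | zero => simp
  | succ a ih =>
    have hne : ∀ i ≤ a + 1, y - m - i ≠ 0 := fun i hi h => hy i hi (by linarith)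
    rw [Function.iterate_succ_apply', fwdDiff, ih (m + 1) fun i hi => by
        push_cast; rw [add_assoc]; exact_mod_cast hy (1 + i) (by omega),
      ih m fun i hi => hy i (by omega)]
    have hlow : ∏ i ∈ range (a + 1 + 1), (y - m - i) =
        (y - m) * ∏ i ∈ range (a + 1), (y - ↑(m + 1) - i) := by
      rw [prod_range_succ', mul_comm]; push_cast
      congr 1
      · ring
      · exact prod_congr rfl fun i _ => by ring
    have hhigh : ∏ i ∈ range (a + 1 + 1), (y - m - i) =
        (∏ i ∈ range (a + 1), (y - m - i)) * (y - m - (a + 1 : ℕ)) := prod_range_succ _ _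
    have hym : y - m ≠ 0 := by simpa using hne 0 (Nat.zero_le _)
    have hyma : y - m - (a + 1 : ℕ) ≠ 0 := hne (a + 1) le_rfl
    have hlow' : (∏ i ∈ range (a + 1), (y - ↑(m + 1) - i))⁻¹ =
        (y - m) * (∏ i ∈ range (a + 1 + 1), (y - m - i))⁻¹ := by
      rw [hlow, mul_inv, ← mul_assoc, mul_inv_cancel₀ hym, one_mul]
    have hhigh' : (∏ i ∈ range (a + 1), (y - m - i))⁻¹ =
        (y - m - (a + 1 : ℕ)) * (∏ i ∈ range (a + 1 + 1), (y - m - i))⁻¹ := by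
      rw [hhigh, mul_inv, mul_comm, mul_assoc, inv_mul_cancel₀ hyma, mul_one]
    rw [hlow', hhigh', Nat.factorial_succ]
    push_cast
    ring

lemma cast_descFactorial_eq_prod {n k : ℕ} (h : k ≤ n) :
    (n.descFactorial k : ℝ) = ∏ i ∈ range k, ((n : ℝ) - i) := by
  rw [Nat.descFactorial_eq_prod_range, Nat.cast_prod]
  exact prod_congr rfl fun i hi => Nat.cast_sub (by simp at hi; omega)

lemma cast_choose_succ_right_mul (k b : ℕ) :
    (k.choose (b + 1) : ℝ) * (b + 1) = k.choose b * ((k : ℝ) - b) := by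
  rcases le_or_gt b k with h | h
  · have := congrArg (Nat.cast (R := ℝ)) (Nat.choose_succ_right_eq k b)
    push_cast [Nat.cast_sub h] at this
    exact this
  · simp [Nat.choose_eq_zero_of_lt h, Nat.choose_eq_zero_of_lt (h.trans (Nat.lt_succ_self b))]

lemma sum_alternating_choose_mul_choose_div (M b n : ℕ) (hb : b ≤ M) (hn : M < n) :
    ∑ k ∈ range (M + 1), (M.choose k : ℝ) * (-1) ^ (M - k) * k.choose b / (n - k) =
      n.choose b * M ! / n.descFactorial (M + 1) := by
  induction b with
  | zero =>
    have h := fwdDiff_iter_inv_sub n M 0 fun i hi => by norm_cast; omega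
    rw [fwdDiff_iter_eq_sum_alternating] at h
    simp only [Nat.cast_zero, sub_zero] at h
    rw [cast_descFactorial_eq_prod hn, Nat.choose_zero_right, Nat.cast_one, one_mul,
      div_eq_mul_inv, ← h]
    exact sum_congr rfl fun k _ => by simp [div_eq_mul_inv]
  | succ b ih =>
    -- `C(k, b+1) (b+1) / (n-k) = C(k, b) (n-b) / (n-k) - C(k, b)`, and the alternating sum of the
    -- `C(k, b)` vanishes since `b < M`.
    have hsub : ∀ k ∈ range (M + 1),
        (M.choose k : ℝ) * (-1) ^ (M - k) * k.choose (b + 1) / (n - k) * (b + 1) =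
          (n - b) * ((M.choose k : ℝ) * (-1) ^ (M - k) * k.choose b / (n - k)) -
            (M.choose k : ℝ) * (-1) ^ (M - k) * k.choose b := fun k hk => by
      have hk : (n : ℝ) - k ≠ 0 := sub_ne_zero.2 (by norm_cast; simp at hk; omega)
      calc _ = (M.choose k : ℝ) * (-1) ^ (M - k) * (k.choose b * ((k : ℝ) - b)) / (n - k) := by
            rw [← cast_choose_succ_right_mul]; ring
        _ = _ := by field_simp; ring
    have hsum := sum_congr rfl hsub
    rw [← sum_mul, sum_sub_distrib, ← mul_sum, ih (by omega),
      sum_alternating_choose_mul_choose, if_neg (by omega), sub_zero] at hsum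
    have hb1 : (b : ℝ) + 1 ≠ 0 := by positivity
    apply mul_right_cancel₀ hb1
    rw [hsum, div_mul_eq_mul_div, mul_right_comm, cast_choose_succ_right_mul]
    ring

lemma sum_alternating_choose_div_mul_of_fwdDiff_iter_eq_zero {f : ℕ → ℝ} {M n : ℕ}
    (hf : Δ_[1] ^[M + 2] f = 0) (hn : M < n) :
    ∑ k ∈ range (M + 1), (M.choose k : ℝ) * (-1) ^ (M - k) / (n - k) * f k =
      ∑ b ∈ range (M + 1), Δ_[1] ^[b] f 0 * (n.choose b * M ! / n.descFactorial (M + 1)) := by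
  have hvanish : ∑ k ∈ range (M + 1),
      (M.choose k : ℝ) * (-1) ^ (M - k) * k.choose (M + 1) / (n - k) = 0 :=
    sum_eq_zero fun k hk => by rw [Nat.choose_eq_zero_of_lt (mem_range.1 hk)]; simp
  calc _ = ∑ k ∈ range (M + 1), ∑ b ∈ range (M + 2),
        Δ_[1] ^[b] f 0 * ((M.choose k : ℝ) * (-1) ^ (M - k) * k.choose b / (n - k)) :=
        sum_congr rfl fun k _ => by
          rw [eq_sum_choose_mul_fwdDiff_iter hf k, mul_sum]
          exact sum_congr rfl fun b _ => by ring
    _ = ∑ b ∈ range (M + 2), Δ_[1] ^[b] f 0 *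
        ∑ k ∈ range (M + 1), (M.choose k : ℝ) * (-1) ^ (M - k) * k.choose b / (n - k) := by
        rw [sum_comm]; simp_rw [mul_sum]
    _ = _ := by
        rw [sum_range_succ, hvanish, mul_zero, add_zero]
        exact sum_congr rfl fun b hb => by
          rw [sum_alternating_choose_mul_choose_div M b n (Nat.lt_succ_iff.1 (mem_range.1 hb)) hn]

theorem div_descFactorial_eq_of_fwdDiff_iter_eq_zero {f : ℕ → ℝ} {τ n : ℕ}
    (hf : Δ_[1] ^[τ + 1] f = 0) (hn : τ ≤ n) :
    f n / n.descFactorial τ =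
      (τ ! : ℝ)⁻¹ * ∑ k ∈ range (τ + 1), (τ.choose k : ℝ) * (-1) ^ (τ - k) * f k +
        ((τ - 1)! : ℝ)⁻¹ * ∑ k ∈ range τ,
          ((τ - 1).choose k : ℝ) * (-1) ^ (τ - k - 1) / ((n : ℝ) - k) * f k := by
  rw [← fwdDiff_iter_eq_sum_alternating, eq_sum_choose_mul_fwdDiff_iter hf n]
  rcases τ with _ | M
  · simp
  have hexp : ∀ k, M + 1 - k - 1 = M - k := fun k => by omega
  have hdesc : (n.descFactorial (M + 1) : ℝ) = (M + 1)! * n.choose (M + 1) := by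
    exact_mod_cast Nat.descFactorial_eq_factorial_mul_choose n (M + 1)
  have hchoose : n.choose (M + 1) ≠ 0 := (Nat.choose_pos hn).ne'
  simp_rw [Nat.add_sub_cancel, hexp]
  rw [sum_alternating_choose_div_mul_of_fwdDiff_iter_eq_zero hf hn, sum_range_succ, add_div,
    sum_div, mul_sum, add_comm]
  congr 1
  · rw [hdesc]; field_simp
  · exact sum_congr rfl fun b _ => by field_simp

section Moments

variable {Ω : Type*} [MeasurableSpace Ω] {μ : Measure Ω}

lemma memLp_of_integrable_abs_pow_s14 {f : Ω → ℝ} (hf : AEStronglyMeasurable f μ) {q : ℕ}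
    (hint : Integrable (fun ω => |f ω| ^ q) μ) : MemLp f q μ := by
  rcases eq_or_ne q 0 with rfl | hq
  · simpa using hf
  · rw [← integrable_norm_rpow_iff hf (by simpa using hq) (by simp)]
    simpa [Real.norm_eq_abs] using hint

lemma MeasureTheory.MemLp.integrable_pow_nat [IsFiniteMeasure μ] {f : Ω → ℝ} {q : ℕ}
    (hf : MemLp f q μ) : Integrable (fun ω => f ω ^ q) μ :=
  (integrable_norm_iff (hf.1.pow q)).1 (by simpa [norm_pow] using hf.integrable_norm_pow')

variable (Y : ℕ → Ω → ℝ)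

lemma memLp_partialSum (hmeas : ∀ i, Measurable (Y i))
    (hident : ∀ i, IdentDistrib (Y i) (Y 0) μ μ)
    (hmom : ∀ q : ℕ, Integrable (fun ω => |Y 0 ω| ^ q) μ) (n q : ℕ) :
    MemLp (fun ω => ∑ i ∈ range n, Y i ω) q μ :=
  memLp_finsetSum (range n) fun i _ => (hident i).memLp_iff.2 <|
    memLp_of_integrable_abs_pow_s14 (hmeas 0).aestronglyMeasurable (hmom q)

lemma integral_partialSum_succ_pow [IsFiniteMeasure μ] (hmeas : ∀ i, Measurable (Y i))
    (hindep : iIndepFun Y μ) (hident : ∀ i, IdentDistrib (Y i) (Y 0) μ μ)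
    (hmom : ∀ q : ℕ, Integrable (fun ω => |Y 0 ω| ^ q) μ) (n j : ℕ) :
    ∫ ω, (∑ i ∈ range (n + 1), Y i ω) ^ j ∂μ =
      ∑ i ∈ range (j + 1), (j.choose i : ℝ) *
        ((∫ ω, (∑ k ∈ range n, Y k ω) ^ i ∂μ) * ∫ ω, Y 0 ω ^ (j - i) ∂μ) := by
  have hindep_pow : ∀ a b : ℕ,
      IndepFun (fun ω => (∑ k ∈ range n, Y k ω) ^ a) (fun ω => Y n ω ^ b) μ := fun a b => by
    have := (hindep.indepFun_finsetSum_of_notMem hmeas (notMem_range_self (n := n))).comp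
      (measurable_id.pow_const a) (measurable_id.pow_const b)
    simpa only [Function.comp_def, Finset.sum_apply, id] using this
  have hS : ∀ a : ℕ, Integrable (fun ω => (∑ k ∈ range n, Y k ω) ^ a) μ := fun a =>
    (memLp_partialSum Y hmeas hident hmom n a).integrable_pow_nat
  have hYn : ∀ b : ℕ, Integrable (fun ω => Y n ω ^ b) μ := fun b =>
    ((hident n).memLp_iff.2 <|
      memLp_of_integrable_abs_pow_s14 (hmeas 0).aestronglyMeasurable (hmom b)).integrable_pow_nat
  have hexpand : ∀ ω, (∑ i ∈ range (n + 1), Y i ω) ^ j =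
      ∑ i ∈ range (j + 1), (∑ k ∈ range n, Y k ω) ^ i * Y n ω ^ (j - i) * (j.choose i : ℝ) :=
    fun ω => by rw [sum_range_succ, add_pow]
  simp_rw [hexpand]
  rw [integral_finsetSum _ fun i _ => by
    exact ((hindep_pow i (j - i)).integrable_mul (hS i) (hYn _)).mul_const (j.choose i : ℝ)]
  refine sum_congr rfl fun i _ => ?_
  have hmoment : ∫ ω, Y n ω ^ (j - i) ∂μ = ∫ ω, Y 0 ω ^ (j - i) ∂μ :=
    ((hident n).comp (measurable_id.pow_const (j - i))).integral_eq
  rw [integral_mul_const,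
    (hindep_pow i (j - i)).integral_fun_mul_eq_mul_integral (hS i).1 (hYn _).1, hmoment, mul_comm]

lemma fwdDiff_moment_partialSum [IsProbabilityMeasure μ] (hmeas : ∀ i, Measurable (Y i))
    (hindep : iIndepFun Y μ) (hident : ∀ i, IdentDistrib (Y i) (Y 0) μ μ)
    (hmom : ∀ q : ℕ, Integrable (fun ω => |Y 0 ω| ^ q) μ) (j : ℕ) :
    Δ_[1] (fun n => ∫ ω, (∑ i ∈ range n, Y i ω) ^ j ∂μ) =
      ∑ i ∈ range j, ((j.choose i : ℝ) * ∫ ω, Y 0 ω ^ (j - i) ∂μ) •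
        fun n => ∫ ω, (∑ k ∈ range n, Y k ω) ^ i ∂μ := by
  funext n
  simp only [fwdDiff, Finset.sum_apply, Pi.smul_apply, smul_eq_mul]
  rw [integral_partialSum_succ_pow Y hmeas hindep hident hmom, sum_range_succ, Nat.sub_self]
  simp only [pow_zero, integral_const, probReal_univ, smul_eq_mul, mul_one, Nat.choose_self,
    Nat.cast_one, one_mul, add_sub_cancel_right]
  exact sum_congr rfl fun i _ => by ring

theorem fwdDiff_iter_moment_partialSum_eq_zero [IsProbabilityMeasure μ]
    (hmeas : ∀ i, Measurable (Y i)) (hindep : iIndepFun Y μ)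
    (hident : ∀ i, IdentDistrib (Y i) (Y 0) μ μ)
    (hmom : ∀ q : ℕ, Integrable (fun ω => |Y 0 ω| ^ q) μ) (r : ℕ)
    (hcent : ∀ k ∈ Icc 1 r, ∫ ω, Y 0 ω ^ k ∂μ = 0) (j : ℕ) :
    Δ_[1] ^[j / (r + 1) + 1] (fun n => ∫ ω, (∑ i ∈ range n, Y i ω) ^ j ∂μ) = 0 := by
  induction j using Nat.strong_induction_on with
  | _ j ih =>
  rw [Function.iterate_succ_apply, fwdDiff_moment_partialSum Y hmeas hindep hident hmom,
    fwdDiff_iter_finsetSum]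
  refine sum_eq_zero fun i hi => ?_
  have hij : i < j := mem_range.1 hi
  rw [fwdDiff_iter_const_smul]
  rcases le_or_gt (j - i) r with hsmall | hlarge
  · rw [hcent (j - i) (mem_Icc.2 ⟨by omega, hsmall⟩), mul_zero, zero_smul]
  · have hdeg : (i + (r + 1)) / (r + 1) ≤ j / (r + 1) := Nat.div_le_div_right (by omega)
    rw [Nat.add_div_right i (Nat.succ_pos r)] at hdeg
    rw [fwdDiff_iter_eq_zero_of_le (ih i hij) hdeg, smul_zero]

end Moments

theorem stmt_14_general {Ω : Type*} [MeasurableSpace Ω] (μ : Measure Ω) [IsProbabilityMeasure μ]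
    (Y : ℕ → Ω → ℝ) (hmeas : ∀ i, Measurable (Y i))
    (hindep : iIndepFun Y μ)
    (hident : ∀ i, IdentDistrib (Y i) (Y 0) μ μ)
    (hmom : ∀ j : ℕ, Integrable (fun ω => |Y 0 ω| ^ j) μ)
    (r : ℕ)
    (hcent : ∀ k ∈ Finset.Icc 1 r, ∫ ω, (Y 0 ω) ^ k ∂μ = 0)
    (j τ n : ℕ) (hτdef : τ = j / (r + 1)) (hn : τ ≤ n) :
    (∫ ω, (∑ i ∈ Finset.range n, Y i ω) ^ j ∂μ) / (n.descFactorial τ : ℝ)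
      = ((τ.factorial : ℝ)⁻¹ * ∑ k ∈ Finset.range (τ + 1),
            (τ.choose k : ℝ) * (-1) ^ (τ - k) *
              ∫ ω, (∑ i ∈ Finset.range k, Y i ω) ^ j ∂μ)
        + ((τ - 1).factorial : ℝ)⁻¹ * ∑ k ∈ Finset.range τ,
            ((τ - 1).choose k : ℝ) * (-1) ^ (τ - k - 1) / ((n : ℝ) - (k : ℝ)) *
              ∫ ω, (∑ i ∈ Finset.range k, Y i ω) ^ j ∂μ := by
  have hpoly := fwdDiff_iter_moment_partialSum_eq_zero Y hmeas hindep hident hmom r hcent j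
  rw [← hτdef] at hpoly
  exact div_descFactorial_eq_of_fwdDiff_iter_eq_zero hpoly hn

/-- For `Y` with vanishing moments up to order `r ≥ 1`, all moments finite, and
`τ = ⌊j/(r+1)⌋ ≥ 1`, for every `n ≥ τ`:
`E[S_n^j]/(n)_τ = S_Y(j,τ)
  + (1/(τ-1)!) ∑_{k=0}^{τ-1} C(τ-1,k) (-1)^{τ-k-1}/(n-k) · E[S_k^j]`. -/
theorem stmt_14 {Ω : Type*} [MeasurableSpace Ω] (μ : Measure Ω) [IsProbabilityMeasure μ]
    (Y : ℕ → Ω → ℝ) (hmeas : ∀ i, Measurable (Y i))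
    (hindep : iIndepFun Y μ)
    (hident : ∀ i, IdentDistrib (Y i) (Y 0) μ μ)
    (hmom : ∀ j : ℕ, Integrable (fun ω => |Y 0 ω| ^ j) μ)
    (r : ℕ) (hr : 1 ≤ r)
    (hcent : ∀ k ∈ Finset.Icc 1 r, ∫ ω, (Y 0 ω) ^ k ∂μ = 0)
    (j τ n : ℕ) (hτdef : τ = j / (r + 1)) (hτ : 1 ≤ τ) (hn : τ ≤ n) :
    (∫ ω, (∑ i ∈ Finset.range n, Y i ω) ^ j ∂μ) / (n.descFactorial τ : ℝ)
      = ((τ.factorial : ℝ)⁻¹ * ∑ k ∈ Finset.range (τ + 1),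
            (τ.choose k : ℝ) * (-1) ^ (τ - k) *
              ∫ ω, (∑ i ∈ Finset.range k, Y i ω) ^ j ∂μ)
        + ((τ - 1).factorial : ℝ)⁻¹ * ∑ k ∈ Finset.range τ,
            ((τ - 1).choose k : ℝ) * (-1) ^ (τ - k - 1) / ((n : ℝ) - (k : ℝ)) *
              ∫ ω, (∑ i ∈ Finset.range k, Y i ω) ^ j ∂μ :=
  stmt_14_general μ Y hmeas hindep hident hmom r hcent j τ n hτdef hn
end
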